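/- arXiv:1207.3410 — 5 statements merged into one kernel-verified Lean document; each statement's English description precedes it below -/
import Mathlib

section
/- For a finite connected weighted graph subset Ω of an infinite graph with at least 2 vertices, the smallest and largest Dirichlet eigenvalues satisfy λ₁(Ω) + λ_max(Ω) ≤ 2 - 2·min_{x∈Ω} μ_{xx}/μ(x) ≤ 2. -/
open Finset

variable {V : Type*}

noncomputable def deg (μ : V → V → ℝ) (x : V) : ℝ := ∑ᶠ y, μ x y

noncomputable def eSum (μ : V → V → ℝ) (A B : Finset V) : ℝ :=
  ∑ x ∈ A, ∑ y ∈ B, μ x y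

noncomputable def vol (μ : V → V → ℝ) (U : Finset V) : ℝ := ∑ x ∈ U, deg μ x

noncomputable def bdry (μ : V → V → ℝ) (U : Finset V) : ℝ := vol μ U - eSum μ U U

noncomputable def cheeger (μ : V → V → ℝ) (Ω : Finset V) : ℝ :=
  sInf {r : ℝ | ∃ U : Finset V, U.Nonempty ∧ U ⊆ Ω ∧ r = bdry μ U / vol μ U}

noncomputable def dualCheeger (μ : V → V → ℝ) (Ω : Finset V) : ℝ :=
  sSup {r : ℝ | ∃ V₁ V₂ : Finset V, V₁.Nonempty ∧ V₂.Nonempty ∧ Disjoint V₁ V₂ ∧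
    V₁ ⊆ Ω ∧ V₂ ⊆ Ω ∧ r = 2 * eSum μ V₁ V₂ / (vol μ V₁ + vol μ V₂)}

noncomputable def dLap (μ : V → V → ℝ) (Ω : Finset V) (f : V → ℝ) (x : V) : ℝ :=
  f x - (1 / deg μ x) * ∑ y ∈ Ω, μ x y * f y

def IsDirEigfun (μ : V → V → ℝ) (Ω : Finset V) (lam : ℝ) (f : V → ℝ) : Prop :=
  (∃ x ∈ Ω, f x ≠ 0) ∧ (∀ x ∉ Ω, f x = 0) ∧ ∀ x ∈ Ω, dLap μ Ω f x = lam * f x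

def IsDirEig (μ : V → V → ℝ) (Ω : Finset V) (lam : ℝ) : Prop :=
  ∃ f : V → ℝ, IsDirEigfun μ Ω lam f

noncomputable def lam1 (μ : V → V → ℝ) (Ω : Finset V) : ℝ :=
  sInf {l : ℝ | IsDirEig μ Ω l}

noncomputable def lamMax (μ : V → V → ℝ) (Ω : Finset V) : ℝ :=
  sSup {l : ℝ | IsDirEig μ Ω l}

def ConnectedOn (μ : V → V → ℝ) (Ω : Finset V) : Prop :=
  ∀ x ∈ Ω, ∀ y ∈ Ω,
    Relation.ReflTransGen (fun a b => a ∈ Ω ∧ b ∈ Ω ∧ μ a b ≠ 0) x y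

def BipartiteOn (μ : V → V → ℝ) (Ω : Finset V) : Prop :=
  ∃ U₁ U₂ : Finset V, Disjoint U₁ U₂ ∧ (U₁ : Set V) ∪ ↑U₂ = ↑Ω ∧
    (∀ x ∈ U₁, ∀ y ∈ U₁, μ x y = 0) ∧ (∀ x ∈ U₂, ∀ y ∈ U₂, μ x y = 0)

/-!
With `D = diag μ(x)` and `W_Ω = (μ_xy)_{x,y ∈ Ω}`, conjugating by `D^{1/2}` turns `Δ_Ω` into
`I - B` with `B = D^{-1/2} W_Ω D^{-1/2}` symmetric, so
`λ₁(Ω) = 1 - ν`, where `ν`, the supremum of the Rayleigh quotient of `B`, is its top eigenvalue.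
If `Bg = (1 - λ) g`, the test vector `|g|` gives `⟨B|g|, |g|⟩ + ⟨Bg, g⟩ ≥ 2 (min_x B_xx) ‖g‖²`,
because every off-diagonal term `B_xy (|g_x g_y| + g_x g_y)` is nonnegative. Hence
`ν ≥ 2 min_x B_xx - (1 - λ)`, that is `λ ≤ 2 - 2 min_x μ_xx / μ(x) - λ₁(Ω)`.
-/

open Module.End Matrix
open scoped RealInnerProductSpace

namespace LinearMap

variable {E : Type*} [NormedAddCommGroup E] [InnerProductSpace ℝ E] [FiniteDimensional ℝ E]

noncomputable def supRayleigh (T : E →ₗ[ℝ] E) : ℝ :=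
  ⨆ x : {x : E // x ≠ 0}, ⟪T x, x⟫ / ‖(x : E)‖ ^ 2

variable (T : E →ₗ[ℝ] E)

theorem bddAbove_rayleigh :
    BddAbove (Set.range fun x : {x : E // x ≠ 0} => ⟪T x, x⟫ / ‖(x : E)‖ ^ 2) := by
  refine ⟨‖T.toContinuousLinearMap‖, ?_⟩
  rintro _ ⟨x, rfl⟩
  exact (le_abs_self _).trans (T.toContinuousLinearMap.rayleighQuotient_le_norm x)

theorem rayleigh_le_supRayleigh {x : E} (hx : x ≠ 0) : ⟪T x, x⟫ / ‖x‖ ^ 2 ≤ T.supRayleigh :=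
  le_ciSup (f := fun x : {x : E // x ≠ 0} => ⟪T x, x⟫ / ‖(x : E)‖ ^ 2)
    (bddAbove_rayleigh T) ⟨x, hx⟩

theorem IsSymmetric.hasEigenvalue_supRayleigh [Nontrivial E] {T : E →ₗ[ℝ] E}
    (hT : T.IsSymmetric) : HasEigenvalue T T.supRayleigh := by
  simpa only [supRayleigh, RCLike.re_to_real, RCLike.ofReal_real_eq_id, id_eq] using
    hT.hasEigenvalue_iSup_of_finiteDimensional

end LinearMap

theorem Module.End.HasEigenvalue.le_supRayleigh {E : Type*} [NormedAddCommGroup E]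
    [InnerProductSpace ℝ E] [FiniteDimensional ℝ E] {T : E →ₗ[ℝ] E} {ν : ℝ}
    (h : HasEigenvalue T ν) : ν ≤ T.supRayleigh := by
  obtain ⟨x, hx⟩ := h.exists_hasEigenvector
  have hx0 : ‖x‖ ^ 2 ≠ 0 := by simpa using hx.2
  calc ν = ⟪T x, x⟫ / ‖x‖ ^ 2 := by
        rw [hx.apply_eq_smul, real_inner_smul_left, real_inner_self_eq_norm_sq,
          mul_div_cancel_right₀ _ hx0]
    _ ≤ _ := T.rayleigh_le_supRayleigh hx.2

theorem EuclideanSpace.norm_toLp_abs {ι : Type*} [Fintype ι] (v : EuclideanSpace ℝ ι) :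
    ‖WithLp.toLp 2 fun x => |v x|‖ = ‖v‖ := by
  simp [EuclideanSpace.norm_eq]

namespace Matrix

variable {ι : Type*} [Fintype ι] [DecidableEq ι]

theorem inner_toEuclideanLin_self (A : Matrix ι ι ℝ) (v : EuclideanSpace ℝ ι) :
    ⟪toEuclideanLin A v, v⟫ = ∑ x, ∑ y, A x y * (v x * v y) := by
  simp only [EuclideanSpace.inner_eq_star_dotProduct, toLpLin_apply, dotProduct, mulVec,
    star_trivial, Finset.mul_sum]
  exact Finset.sum_congr rfl fun x _ => Finset.sum_congr rfl fun y _ => by ring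

theorem two_mul_norm_sq_le_inner_abs_add {A : Matrix ι ι ℝ} {m : ℝ}
    (hoff : Pairwise fun x y => 0 ≤ A x y) (hdiag : ∀ x, m ≤ A x x) (v : EuclideanSpace ℝ ι) :
    2 * m * ‖v‖ ^ 2 ≤
      ⟪toEuclideanLin A (WithLp.toLp 2 fun x => |v x|), WithLp.toLp 2 fun x => |v x|⟫ +
        ⟪toEuclideanLin A v, v⟫ := by
  rw [inner_toEuclideanLin_self, inner_toEuclideanLin_self, ← Finset.sum_add_distrib,
    EuclideanSpace.real_norm_sq_eq, Finset.mul_sum]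
  refine Finset.sum_le_sum fun x _ => ?_
  simp only [← Finset.sum_add_distrib, ← mul_add]
  have hterm (y : ι) : 0 ≤ |v x| * |v y| + v x * v y := by
    rw [← abs_mul]
    exact neg_le_iff_add_nonneg'.mp (neg_abs_le _)
  calc 2 * m * v x ^ 2 ≤ A x x * (|v x| * |v x| + v x * v x) := by
        rw [abs_mul_abs_self]
        nlinarith [hdiag x, sq_nonneg (v x)]
    _ ≤ ∑ y, A x y * (|v x| * |v y| + v x * v y) := by
        rw [← Finset.add_sum_erase _ _ (Finset.mem_univ x)]
        exact le_add_of_nonneg_right <| Finset.sum_nonneg fun y hy =>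
          mul_nonneg (hoff (Finset.ne_of_mem_erase hy).symm) (hterm y)

theorem two_mul_sub_le_supRayleigh_of_hasEigenvalue {A : Matrix ι ι ℝ} {m ν : ℝ}
    (hoff : Pairwise fun x y => 0 ≤ A x y) (hdiag : ∀ x, m ≤ A x x)
    (hν : HasEigenvalue (toEuclideanLin A) ν) :
    2 * m - ν ≤ (toEuclideanLin A).supRayleigh := by
  obtain ⟨v, hv⟩ := hν.exists_hasEigenvector
  set w : EuclideanSpace ℝ ι := WithLp.toLp 2 fun x => |v x|
  have hw : ‖w‖ = ‖v‖ := EuclideanSpace.norm_toLp_abs v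
  have hv0 : 0 < ‖v‖ ^ 2 := pow_pos (norm_pos_iff.mpr hv.2) 2
  have hAv : ⟪toEuclideanLin A v, v⟫ = ν * ‖v‖ ^ 2 := by
    rw [hv.apply_eq_smul, real_inner_smul_left, real_inner_self_eq_norm_sq]
  have key := two_mul_norm_sq_le_inner_abs_add hoff hdiag v
  calc 2 * m - ν ≤ ⟪toEuclideanLin A w, w⟫ / ‖w‖ ^ 2 := by
        rw [hw, le_div_iff₀ hv0]
        linarith
    _ ≤ _ := (toEuclideanLin A).rayleigh_le_supRayleigh
        (norm_ne_zero_iff.mp (hw ▸ norm_ne_zero_iff.mpr hv.2))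

end Matrix

noncomputable def normAdj (μ : V → V → ℝ) (Ω : Finset V) : Matrix Ω Ω ℝ :=
  fun x y => μ x y / (√(deg μ x) * √(deg μ y))

section normAdj

variable {μ : V → V → ℝ}

theorem normAdj_isHermitian (hsymm : ∀ x y, μ x y = μ y x) (Ω : Finset V) :
    (normAdj μ Ω).IsHermitian := by
  ext x y
  simp only [conjTranspose_apply, star_trivial, normAdj, hsymm (x : V), mul_comm]

theorem normAdj_nonneg (hnn : ∀ x y, 0 ≤ μ x y) (Ω : Finset V) (x y : Ω) :
    0 ≤ normAdj μ Ω x y :=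
  div_nonneg (hnn x y) (by positivity)

variable (hdeg : ∀ x, 0 < deg μ x)
include hdeg

theorem normAdj_apply_self (Ω : Finset V) (x : Ω) : normAdj μ Ω x x = μ x x / deg μ x := by
  rw [normAdj, Real.mul_self_sqrt (hdeg x).le]

theorem normAdj_mulVec_sqrt_deg_mul {Ω : Finset V} (f : V → ℝ) (x : Ω) :
    (normAdj μ Ω *ᵥ fun y => √(deg μ y) * f y) x = √(deg μ x) * (f x - dLap μ Ω f x) := by
  have hsqrt (y : V) : √(deg μ y) ≠ 0 := (Real.sqrt_pos.mpr (hdeg y)).ne'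
  rw [dLap, sub_sub_cancel, mulVec, dotProduct, ← Finset.sum_coe_sort Ω, Finset.mul_sum,
    Finset.mul_sum]
  refine Finset.sum_congr rfl fun y _ => ?_
  rw [normAdj]
  field_simp [hsqrt x, hsqrt y]
  rw [Real.sq_sqrt (hdeg x).le]
  field_simp [(hdeg x).ne']

theorem isDirEig_iff_hasEigenvalue [DecidableEq V] {Ω : Finset V} {lam : ℝ} :
    IsDirEig μ Ω lam ↔ HasEigenvalue (toEuclideanLin (normAdj μ Ω)) (1 - lam) := by
  have hsqrt (y : V) : 0 < √(deg μ y) := Real.sqrt_pos.mpr (hdeg y)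
  constructor
  · rintro ⟨f, ⟨x₁, hx₁, hfx₁⟩, -, heig⟩
    refine hasEigenvalue_of_hasEigenvector (x := WithLp.toLp 2 fun y : Ω => √(deg μ y) * f y)
      ⟨mem_eigenspace_iff.mpr ?_, fun h0 => ?_⟩
    · ext x
      simp only [toLpLin_apply, normAdj_mulVec_sqrt_deg_mul hdeg, heig x x.2, PiLp.smul_apply,
        smul_eq_mul]
      ring
    · have := congrArg (fun v : EuclideanSpace ℝ Ω => v ⟨x₁, hx₁⟩) h0
      exact hfx₁ ((mul_eq_zero.mp this).resolve_left (hsqrt x₁).ne')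
  · intro h
    obtain ⟨v, hv, hv0⟩ := h.exists_hasEigenvector
    set f : V → ℝ := fun y => if hy : y ∈ Ω then v ⟨y, hy⟩ / √(deg μ y) else 0
    have hfv : (fun y : Ω => √(deg μ y) * f y) = v := by
      funext y
      simp only [f, y.2, dif_pos]
      field_simp [(hsqrt y).ne']
    obtain ⟨x₁, hx₁⟩ : ∃ x, v x ≠ 0 := by
      by_contra! h0
      exact hv0 (by ext x; exact h0 x)
    refine ⟨f, ⟨x₁, x₁.2, fun h => hx₁ ?_⟩, fun y hy => dif_neg hy, fun x hx => ?_⟩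
    · rw [← congrFun hfv x₁, h, mul_zero]
    · have hx := congrArg (fun w : EuclideanSpace ℝ Ω => w ⟨x, hx⟩) (mem_eigenspace_iff.mp hv)
      simp only [toLpLin_apply, PiLp.smul_apply, smul_eq_mul, ← hfv,
        normAdj_mulVec_sqrt_deg_mul hdeg] at hx
      have : f x - dLap μ Ω f x = (1 - lam) * f x :=
        mul_left_cancel₀ (hsqrt x).ne' (hx.trans (mul_left_comm _ _ _))
      linarith

end normAdj

theorem stmt0_general {V : Type*} (μ : V → V → ℝ) (hsymm : ∀ x y, μ x y = μ y x) (hnn : ∀ x y, 0 ≤ μ x y)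
    (hdeg : ∀ x : V, 0 < deg μ x)
    (Ω : Finset V) (hne : Ω.Nonempty) :
    lam1 μ Ω + lamMax μ Ω ≤ 2 - 2 * Ω.inf' hne (fun x => μ x x / deg μ x) ∧
    2 - 2 * Ω.inf' hne (fun x => μ x x / deg μ x) ≤ 2 := by
  classical
  set m := Ω.inf' hne fun x => μ x x / deg μ x
  set ν := (toEuclideanLin (normAdj μ Ω)).supRayleigh
  have : Nonempty Ω := hne.to_subtype
  have hν : IsDirEig μ Ω (1 - ν) := by
    rw [isDirEig_iff_hasEigenvalue hdeg, sub_sub_cancel]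
    exact (isSymmetric_toEuclideanLin_iff.mpr
      (normAdj_isHermitian hsymm Ω)).hasEigenvalue_supRayleigh
  have hlam1 : lam1 μ Ω = 1 - ν := IsLeast.csInf_eq ⟨hν, fun lam hlam => by
    linarith [((isDirEig_iff_hasEigenvalue hdeg).mp hlam).le_supRayleigh]⟩
  have hdiag (x : Ω) : m ≤ normAdj μ Ω x x := normAdj_apply_self hdeg Ω x ▸ Ω.inf'_le _ x.2
  have hlamMax : lamMax μ Ω ≤ 1 - 2 * m + ν := csSup_le ⟨_, hν⟩ fun lam hlam => by
    linarith [two_mul_sub_le_supRayleigh_of_hasEigenvalue (fun x y _ => normAdj_nonneg hnn Ω x y)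
      hdiag ((isDirEig_iff_hasEigenvalue hdeg).mp hlam)]
  have hm : 0 ≤ m := Ω.le_inf' hne _ fun x _ => div_nonneg (hnn x x) (hdeg x).le
  constructor <;> linarith

theorem stmt0 {V : Type*} [Infinite V] (μ : V → V → ℝ) (hsymm : ∀ x y, μ x y = μ y x) (hnn : ∀ x y, 0 ≤ μ x y)
    (hfin : ∀ x : V, (Function.support (μ x)).Finite) (hdeg : ∀ x : V, 0 < deg μ x)
    (hconnG : ∀ x y : V, Relation.ReflTransGen (fun a b => μ a b ≠ 0) x y)
    (Ω : Finset V) (hconn : ConnectedOn μ Ω) (hcard : 2 ≤ Ω.card) (hne : Ω.Nonempty) :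
    lam1 μ Ω + lamMax μ Ω ≤ 2 - 2 * Ω.inf' hne (fun x => μ x x / deg μ x) ∧
    2 - 2 * Ω.inf' hne (fun x => μ x x / deg μ x) ≤ 2 :=
  stmt0_general μ hsymm hnn hdeg Ω hne
end

section
/- For any finite connected subset Ω of a weighted graph with #Ω≥2, the dual Cheeger constant satisfies h̄(Ω) ≤ 1 - h(Ω), where h(Ω) is the Cheeger constant of Ω. -/
open Finset

variable {V : Type*}

lemma sum_le_deg {μ : V → V → ℝ} (hnn : ∀ x y, 0 ≤ μ x y)
    (hfin : ∀ x : V, (Function.support (μ x)).Finite) (x : V) (U : Finset V) :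
    ∑ y ∈ U, μ x y ≤ deg μ x := by
  classical
  have hsub : Function.support (μ x) ⊆ ↑(U ∪ (hfin x).toFinset) := by
    intro y hy
    simp only [Finset.coe_union, Set.Finite.coe_toFinset]
    exact Or.inr hy
  have hdeg : deg μ x = ∑ y ∈ U ∪ (hfin x).toFinset, μ x y :=
    finsum_eq_sum_of_support_subset _ hsub
  rw [hdeg]
  exact Finset.sum_le_sum_of_subset_of_nonneg Finset.subset_union_left
    (fun y _ _ => hnn x y)

lemma eSum_nonneg {μ : V → V → ℝ} (hnn : ∀ x y, 0 ≤ μ x y) (A B : Finset V) :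
    0 ≤ eSum μ A B :=
  Finset.sum_nonneg fun x _ => Finset.sum_nonneg fun y _ => hnn x y

lemma bdry_nonneg {μ : V → V → ℝ} (hnn : ∀ x y, 0 ≤ μ x y)
    (hfin : ∀ x : V, (Function.support (μ x)).Finite) (U : Finset V) :
    0 ≤ bdry μ U := by
  have : eSum μ U U ≤ vol μ U :=
    Finset.sum_le_sum fun x _ => sum_le_deg hnn hfin x U
  simpa [bdry] using this

lemma vol_pos {μ : V → V → ℝ} (hdeg : ∀ x : V, 0 < deg μ x) {U : Finset V}
    (hU : U.Nonempty) : 0 < vol μ U :=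
  Finset.sum_pos (fun x _ => hdeg x) hU

lemma cheeger_le {μ : V → V → ℝ} (hnn : ∀ x y, 0 ≤ μ x y)
    (hfin : ∀ x : V, (Function.support (μ x)).Finite) (hdeg : ∀ x : V, 0 < deg μ x)
    {Ω U : Finset V} (hUne : U.Nonempty) (hUΩ : U ⊆ Ω) :
    cheeger μ Ω ≤ bdry μ U / vol μ U := by
  apply csInf_le
  · refine ⟨0, ?_⟩
    rintro r ⟨W, hWne, hWΩ, rfl⟩
    exact div_nonneg (bdry_nonneg hnn hfin W) (vol_pos hdeg hWne).le
  · exact ⟨U, hUne, hUΩ, rfl⟩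

theorem stmt4 {V : Type*} [Infinite V] (μ : V → V → ℝ) (hsymm : ∀ x y, μ x y = μ y x) (hnn : ∀ x y, 0 ≤ μ x y)
    (hfin : ∀ x : V, (Function.support (μ x)).Finite) (hdeg : ∀ x : V, 0 < deg μ x)
    (hconnG : ∀ x y : V, Relation.ReflTransGen (fun a b => μ a b ≠ 0) x y)
    (Ω : Finset V) (hconn : ConnectedOn μ Ω) (hcard : 2 ≤ Ω.card) :
    dualCheeger μ Ω ≤ 1 - cheeger μ Ω := by
  classical
  have hΩne : Ω.Nonempty := Finset.card_pos.mp (by omega)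
  -- cheeger ≤ 1
  have hch1 : cheeger μ Ω ≤ 1 := by
    have h1 := cheeger_le hnn hfin hdeg hΩne (subset_refl Ω)
    have h2 : bdry μ Ω / vol μ Ω ≤ 1 := by
      rw [div_le_one (vol_pos hdeg hΩne)]
      have := eSum_nonneg hnn Ω Ω
      simp only [bdry]; linarith
    linarith
  apply Real.sSup_le
  · rintro r ⟨V₁, V₂, h1ne, h2ne, hdisj, h1Ω, h2Ω, rfl⟩
    set W := V₁ ∪ V₂ with hW
    have hWne : W.Nonempty := h1ne.mono Finset.subset_union_left
    have hWΩ : W ⊆ Ω := Finset.union_subset h1Ω h2Ω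
    have hvolW : vol μ W = vol μ V₁ + vol μ V₂ := Finset.sum_union hdisj
    have hvpos : 0 < vol μ V₁ + vol μ V₂ := hvolW ▸ vol_pos hdeg hWne
    -- eSum W W split
    have hsplit : eSum μ W W = eSum μ V₁ V₁ + eSum μ V₁ V₂ + eSum μ V₂ V₁ + eSum μ V₂ V₂ := by
      simp only [eSum, hW, Finset.sum_union hdisj, Finset.sum_add_distrib]
      ring
    have hE12 : 2 * eSum μ V₁ V₂ ≤ eSum μ W W := by
      have hsym : eSum μ V₁ V₂ = eSum μ V₂ V₁ := by
        rw [eSum, eSum, Finset.sum_comm]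
        exact Finset.sum_congr rfl fun x _ => Finset.sum_congr rfl fun y _ => hsymm y x
      have := eSum_nonneg hnn V₁ V₁
      have := eSum_nonneg hnn V₂ V₂
      rw [hsplit]; linarith
    have key : 2 * eSum μ V₁ V₂ / (vol μ V₁ + vol μ V₂)
        ≤ 1 - bdry μ W / vol μ W := by
      have hEW : eSum μ W W = vol μ W - bdry μ W := by
        simp only [bdry]; ring
      rw [hvolW] at hEW
      have hle : 2 * eSum μ V₁ V₂ ≤ (vol μ V₁ + vol μ V₂) - bdry μ W := by
        linarith
      calc 2 * eSum μ V₁ V₂ / (vol μ V₁ + vol μ V₂)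
          ≤ ((vol μ V₁ + vol μ V₂) - bdry μ W) / (vol μ V₁ + vol μ V₂) := by
            exact div_le_div_of_nonneg_right hle hvpos.le
          _ = 1 - bdry μ W / vol μ W := by
            rw [hvolW, sub_div, div_self hvpos.ne']
    have := cheeger_le hnn hfin hdeg hWne hWΩ
    linarith
  · linarith
end

section
/- If Ω is a bipartite finite connected subset, then h(Ω) + h̄(Ω) = 1. -/
open Finset

variable {V : Type*}

theorem stmt5 {V : Type*} [Infinite V] (μ : V → V → ℝ) (hsymm : ∀ x y, μ x y = μ y x) (hnn : ∀ x y, 0 ≤ μ x y)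
    (hfin : ∀ x : V, (Function.support (μ x)).Finite) (hdeg : ∀ x : V, 0 < deg μ x)
    (hconnG : ∀ x y : V, Relation.ReflTransGen (fun a b => μ a b ≠ 0) x y)
    (Ω : Finset V) (hconn : ConnectedOn μ Ω) (hcard : 2 ≤ Ω.card) (hloop : ∀ x : V, μ x x = 0)
    (hbip : BipartiteOn μ Ω) :
    cheeger μ Ω + dualCheeger μ Ω = 1 := by
  classical
  -- basic facts
  have hdeg_ge : ∀ (x : V) (U : Finset V), ∑ y ∈ U, μ x y ≤ deg μ x := by
    intro x U
    have hdeg' : deg μ x = ∑ y ∈ ((hfin x).toFinset ∪ U), μ x y := by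
      refine finsum_eq_finset_sum_of_support_subset _ ?_
      intro y hy
      simp only [Finset.coe_union, Set.mem_union, Finset.mem_coe,
        Set.Finite.mem_toFinset]
      exact Or.inl hy
    rw [hdeg']
    exact Finset.sum_le_sum_of_subset_of_nonneg Finset.subset_union_right
      (fun y _ _ => hnn x y)
  have hvolnn : ∀ U : Finset V, 0 ≤ vol μ U := fun U =>
    Finset.sum_nonneg fun x _ => (hdeg x).le
  have hvolpos : ∀ U : Finset V, U.Nonempty → 0 < vol μ U := fun U hU =>
    Finset.sum_pos (fun x _ => hdeg x) hU
  have heNN : ∀ A B : Finset V, 0 ≤ eSum μ A B := fun A B =>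
    Finset.sum_nonneg fun x _ => Finset.sum_nonneg fun y _ => hnn x y
  have heLe : ∀ A B : Finset V, eSum μ A B ≤ vol μ A := fun A B =>
    Finset.sum_le_sum fun x _ => hdeg_ge x B
  have heComm : ∀ A B : Finset V, eSum μ A B = eSum μ B A := by
    intro A B
    unfold eSum
    rw [Finset.sum_comm]
    exact Finset.sum_congr rfl fun y _ => Finset.sum_congr rfl fun x _ => hsymm x y
  have heUnionL : ∀ (A B C : Finset V), Disjoint A B →
      eSum μ (A ∪ B) C = eSum μ A C + eSum μ B C := by
    intro A B C h
    exact Finset.sum_union h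
  have heUnionR : ∀ (A B C : Finset V), Disjoint A B →
      eSum μ C (A ∪ B) = eSum μ C A + eSum μ C B := by
    intro A B C h
    unfold eSum
    rw [← Finset.sum_add_distrib]
    exact Finset.sum_congr rfl fun x _ => Finset.sum_union h
  have hΩne : Ω.Nonempty := Finset.card_pos.mp (by omega)
  -- bdry nonneg
  have hbdrynn : ∀ U : Finset V, 0 ≤ bdry μ U := by
    intro U
    have := heLe U U
    unfold bdry
    linarith
  have hratio : ∀ U : Finset V, U.Nonempty →
      bdry μ U / vol μ U = 1 - eSum μ U U / vol μ U := by
    intro U hU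
    have hv : vol μ U ≠ 0 := (hvolpos U hU).ne'
    unfold bdry
    rw [sub_div, div_self hv]
  -- the cheeger set
  set C : Set ℝ := {r : ℝ | ∃ U : Finset V, U.Nonempty ∧ U ⊆ Ω ∧ r = bdry μ U / vol μ U}
    with hCdef
  set D : Set ℝ := {r : ℝ | ∃ V₁ V₂ : Finset V, V₁.Nonempty ∧ V₂.Nonempty ∧ Disjoint V₁ V₂ ∧
    V₁ ⊆ Ω ∧ V₂ ⊆ Ω ∧ r = 2 * eSum μ V₁ V₂ / (vol μ V₁ + vol μ V₂)} with hDdef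
  have hCne : C.Nonempty := ⟨bdry μ Ω / vol μ Ω, Ω, hΩne, Finset.Subset.refl _, rfl⟩
  have hCbdd : BddBelow C := by
    refine ⟨0, ?_⟩
    rintro r ⟨U, hU, hUΩ, rfl⟩
    exact div_nonneg (hbdrynn U) (hvolpos U hU).le
  have hDne : D.Nonempty := by
    obtain ⟨a, ha, b, hb, hab⟩ := Finset.one_lt_card.mp hcard
    exact ⟨_, {a}, {b}, Finset.singleton_nonempty a, Finset.singleton_nonempty b,
      Finset.disjoint_singleton.mpr hab, Finset.singleton_subset_iff.mpr ha,
      Finset.singleton_subset_iff.mpr hb, rfl⟩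
  have hDnn : ∀ d ∈ D, 0 ≤ d := by
    rintro d ⟨V₁, V₂, h1, h2, hd, hs1, hs2, rfl⟩
    exact div_nonneg (by have := heNN V₁ V₂; linarith)
      (by have := hvolpos V₁ h1; have := hvolpos V₂ h2; linarith)
  have hDbdd : BddAbove D := by
    refine ⟨1, ?_⟩
    rintro r ⟨V₁, V₂, h1, h2, hd, hs1, hs2, rfl⟩
    have hpos : 0 < vol μ V₁ + vol μ V₂ := by
      have := hvolpos V₁ h1; have := hvolpos V₂ h2; linarith
    rw [div_le_one hpos]
    have e1 : eSum μ V₁ V₂ ≤ vol μ V₁ := heLe V₁ V₂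
    have e2 : eSum μ V₁ V₂ ≤ vol μ V₂ := (heComm V₁ V₂) ▸ heLe V₂ V₁
    linarith
  have hcheeger_le : ∀ U : Finset V, U.Nonempty → U ⊆ Ω →
      cheeger μ Ω ≤ bdry μ U / vol μ U := by
    intro U hU hUΩ
    exact csInf_le hCbdd ⟨U, hU, hUΩ, rfl⟩
  -- direction 1 : dualCheeger ≤ 1 - cheeger
  have hdir1 : dualCheeger μ Ω ≤ 1 - cheeger μ Ω := by
    unfold dualCheeger
    refine csSup_le hDne ?_
    rintro d ⟨V₁, V₂, h1, h2, hd, hs1, hs2, rfl⟩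
    set U : Finset V := V₁ ∪ V₂ with hUdef
    have hUne : U.Nonempty := h1.mono Finset.subset_union_left
    have hUΩ : U ⊆ Ω := Finset.union_subset hs1 hs2
    have hvolU : vol μ U = vol μ V₁ + vol μ V₂ := Finset.sum_union hd
    have hEU : eSum μ V₁ V₁ + eSum μ V₁ V₂ + (eSum μ V₂ V₁ + eSum μ V₂ V₂)
        = eSum μ U U := by
      rw [hUdef, heUnionL V₁ V₂ _ hd, heUnionR V₁ V₂ V₁ hd, heUnionR V₁ V₂ V₂ hd]
    have h2e : 2 * eSum μ V₁ V₂ ≤ eSum μ U U := by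
      have := heNN V₁ V₁
      have := heNN V₂ V₂
      have := heComm V₁ V₂
      linarith
    have hvpos : 0 < vol μ U := hvolpos U hUne
    have hstep : 2 * eSum μ V₁ V₂ / (vol μ V₁ + vol μ V₂) ≤ eSum μ U U / vol μ U := by
      rw [← hvolU]
      gcongr
    have hch : cheeger μ Ω ≤ 1 - eSum μ U U / vol μ U := by
      have := hcheeger_le U hUne hUΩ
      rw [hratio U hUne] at this
      linarith
    linarith
  -- dualCheeger nonneg
  have hdcnn : 0 ≤ dualCheeger μ Ω := by
    obtain ⟨d, hdmem⟩ := hDne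
    exact le_trans (hDnn d hdmem) (le_csSup hDbdd hdmem)
  -- direction 2 : 1 - dualCheeger ≤ cheeger
  have hdir2 : 1 - dualCheeger μ Ω ≤ cheeger μ Ω := by
    unfold cheeger
    refine le_csInf hCne ?_
    rintro c ⟨U, hU, hUΩ, rfl⟩
    rw [hratio U hU]
    -- suffices eSum U U / vol U ≤ dualCheeger
    have hmain : eSum μ U U / vol μ U ≤ dualCheeger μ Ω := by
      obtain ⟨U₁, U₂, hdisj, hcover, hz1, hz2⟩ := hbip
      set A : Finset V := U ∩ U₁ with hAdef
      set B : Finset V := U ∩ U₂ with hBdef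
      have hABdisj : Disjoint A B :=
        hdisj.mono Finset.inter_subset_right Finset.inter_subset_right
      have hUAB : U = A ∪ B := by
        ext x
        simp only [hAdef, hBdef, Finset.mem_union, Finset.mem_inter]
        constructor
        · intro hx
          have hxΩ : x ∈ (U₁ : Set V) ∪ ↑U₂ := by
            rw [hcover]
            exact_mod_cast hUΩ hx
          rcases hxΩ with h | h
          · exact Or.inl ⟨hx, by exact_mod_cast h⟩
          · exact Or.inr ⟨hx, by exact_mod_cast h⟩
        · rintro (⟨h, _⟩ | ⟨h, _⟩) <;> exact h
      have hAA : eSum μ A A = 0 :=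
        Finset.sum_eq_zero fun x hx => Finset.sum_eq_zero fun y hy =>
          hz1 x (Finset.mem_inter.mp hx).2 y (Finset.mem_inter.mp hy).2
      have hBB : eSum μ B B = 0 :=
        Finset.sum_eq_zero fun x hx => Finset.sum_eq_zero fun y hy =>
          hz2 x (Finset.mem_inter.mp hx).2 y (Finset.mem_inter.mp hy).2
      have hEU : eSum μ U U = 2 * eSum μ A B := by
        rw [hUAB, heUnionL A B _ hABdisj, heUnionR A B A hABdisj,
          heUnionR A B B hABdisj, hAA, hBB, heComm B A]
        ring
      rcases A.eq_empty_or_nonempty with hAe | hAne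
      · have : eSum μ A B = 0 := by
          rw [hAe]; simp [eSum]
        rw [hEU, this]
        simpa using hdcnn
      rcases B.eq_empty_or_nonempty with hBe | hBne
      · have : eSum μ A B = 0 := by
          rw [hBe]; simp [eSum]
        rw [hEU, this]
        simpa using hdcnn
      · -- both nonempty : element of D
        have hvolU : vol μ U = vol μ A + vol μ B := by
          rw [hUAB]; exact Finset.sum_union hABdisj
        have hmem : 2 * eSum μ A B / (vol μ A + vol μ B) ∈ D :=
          ⟨A, B, hAne, hBne, hABdisj,
            fun x hx => hUΩ (hUAB ▸ Finset.mem_union_left B hx),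
            fun x hx => hUΩ (hUAB ▸ Finset.mem_union_right A hx), rfl⟩
        have := le_csSup hDbdd hmem
        rw [hEU, hvolU]
        exact this
    linarith
  linarith
end

section
/- (Barta-type theorem for the largest eigenvalue) Let Ω be a finite connected subset and f: Ω→ℝ with f(x)≠0 for all x∈Ω. Then λ_max(Ω) ≥ inf_{x∈Ω} (Δ_Ω f)(x)/f(x). -/
open Finset

variable {V : Type*}

/-!
Conjugating by `s = √deg` turns `Δ_Ω` into the symmetric matrix `1 - D^{-1/2} μ D^{-1/2}` on
`ℓ²(Ω)` and `(·,·)_μ` into the Euclidean inner product. The supremum `λ` of the Rayleigh quotient of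
that matrix is one of its eigenvalues, hence a Dirichlet eigenvalue, and it bounds every quotient
`(Δ_Ω g, g)_μ / (g, g)_μ`. In particular it bounds every Dirichlet eigenvalue, so the supremum
defining `λ_max(Ω)` is over a bounded set and `λ ≤ λ_max(Ω)`.
With `c = inf Δ_Ω f / f` we have `c f² ≤ (Δ_Ω f) f` pointwise, and summing against `deg` gives
`c ≤ (Δ_Ω f, f)_μ / (f, f)_μ ≤ λ`.
-/

theorem LinearMap.IsSymmetric.exists_hasEigenvalue_forall_re_inner_le {𝕜 E : Type*} [RCLike 𝕜]
    [NormedAddCommGroup E] [InnerProductSpace 𝕜 E] [FiniteDimensional 𝕜 E] [Nontrivial E]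
    {T : E →ₗ[𝕜] E} (hT : T.IsSymmetric) :
    ∃ lam : ℝ, Module.End.HasEigenvalue T lam ∧
      ∀ v, RCLike.re (inner 𝕜 (T v) v) ≤ lam * ‖v‖ ^ 2 := by
  refine ⟨_, hT.hasEigenvalue_iSup_of_finiteDimensional, fun v => ?_⟩
  rcases eq_or_ne v 0 with rfl | hv
  · simp
  have hbdd : BddAbove (Set.range fun x : {x : E // x ≠ 0} =>
      RCLike.re (inner 𝕜 (T x) (x : E)) / ‖(x : E)‖ ^ 2) :=
    ⟨‖LinearMap.toContinuousLinearMap T‖, by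
      rintro _ ⟨x, rfl⟩
      exact (le_abs_self _).trans ((LinearMap.toContinuousLinearMap T).rayleighQuotient_le_norm x)⟩
  have hv2 : 0 < ‖v‖ ^ 2 := by positivity
  simpa only [div_le_iff₀ hv2] using le_ciSup hbdd ⟨v, hv⟩

section Dirichlet

variable (μ : V → V → ℝ) (Ω : Finset V)

/-- The inner product `(g, h)_μ` on `Ω`, with vertex weight `μ(x) = deg μ x`. -/
noncomputable def muInner (g h : V → ℝ) : ℝ := ∑ x ∈ Ω, deg μ x * (g x * h x)

/-- `Δ_Ω` conjugated by `√deg`: the matrix `1 - D^{-1/2} μ D^{-1/2}` on `Ω`. -/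
noncomputable def normLapMatrix [DecidableEq V] : Matrix Ω Ω ℝ :=
  1 - Matrix.of fun x y : Ω => μ x y / (√(deg μ x) * √(deg μ y))

noncomputable def sqrtDegEmbed (g : V → ℝ) : EuclideanSpace ℝ Ω :=
  WithLp.toLp 2 fun x => √(deg μ x) * g x

variable {μ Ω}

theorem isHermitian_normLapMatrix [DecidableEq V] (hsymm : ∀ x y, μ x y = μ y x) :
    (normLapMatrix μ Ω).IsHermitian := by
  refine Matrix.isHermitian_one.sub ?_
  ext x y
  simp [hsymm x y, mul_comm]

theorem normLapMatrix_sqrtDegEmbed [DecidableEq V] (hdeg : ∀ x, 0 < deg μ x) (g : V → ℝ) :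
    (normLapMatrix μ Ω).toEuclideanLin (sqrtDegEmbed μ Ω g) = sqrtDegEmbed μ Ω (dLap μ Ω g) := by
  ext x
  have hx : √(deg μ x) ≠ 0 := (Real.sqrt_pos.2 (hdeg x)).ne'
  have hsum : ∑ y : Ω, μ x y / (√(deg μ x) * √(deg μ y)) * (√(deg μ y) * g y) =
      √(deg μ x) * (1 / deg μ x * ∑ y ∈ Ω, μ x y * g y) := by
    rw [← Finset.sum_coe_sort Ω, Finset.mul_sum, Finset.mul_sum]
    refine Finset.sum_congr rfl fun y _ => ?_
    have hy : √(deg μ y) ≠ 0 := (Real.sqrt_pos.2 (hdeg y)).ne'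
    have hd : deg μ x ≠ 0 := (hdeg x).ne'
    field_simp
    rw [Real.sq_sqrt (hdeg x).le]
    ring
  simp only [normLapMatrix, sqrtDegEmbed, dLap, Matrix.toLpLin_apply, Matrix.sub_mulVec,
    Matrix.one_mulVec, PiLp.toLp_apply, Pi.sub_apply]
  rw [mul_sub, ← hsum]
  rfl

theorem inner_sqrtDegEmbed (hdeg : ∀ x, 0 ≤ deg μ x) (g h : V → ℝ) :
    inner ℝ (sqrtDegEmbed μ Ω g) (sqrtDegEmbed μ Ω h) = muInner μ Ω g h := by
  rw [muInner, ← Finset.sum_coe_sort Ω]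
  simp only [sqrtDegEmbed, PiLp.inner_apply, RCLike.inner_apply, conj_trivial]
  refine Finset.sum_congr rfl fun x _ => ?_
  linear_combination (h x * g x) * Real.mul_self_sqrt (hdeg x)

theorem exists_sqrtDegEmbed_eq (hdeg : ∀ x, 0 < deg μ x) (v : EuclideanSpace ℝ Ω) :
    ∃ g : V → ℝ, (∀ x ∉ Ω, g x = 0) ∧ sqrtDegEmbed μ Ω g = v := by
  classical
  refine ⟨fun x => if hx : x ∈ Ω then v ⟨x, hx⟩ / √(deg μ x) else 0, fun x hx => dif_neg hx, ?_⟩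
  ext x
  have hx : √(deg μ x) ≠ 0 := (Real.sqrt_pos.2 (hdeg x)).ne'
  simp [sqrtDegEmbed, mul_div_cancel₀ _ hx]

theorem sqrtDegEmbed_eq_zero (g : V → ℝ) (hg : ∀ x ∈ Ω, g x = 0) : sqrtDegEmbed μ Ω g = 0 := by
  ext x
  simp [sqrtDegEmbed, hg x x.2]

theorem exists_isDirEig_forall_muInner_dLap_le (hsymm : ∀ x y, μ x y = μ y x)
    (hdeg : ∀ x, 0 < deg μ x) (hne : Ω.Nonempty) :
    ∃ lam, IsDirEig μ Ω lam ∧ ∀ g, muInner μ Ω (dLap μ Ω g) g ≤ lam * muInner μ Ω g g := by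
  classical
  have : Nonempty Ω := hne.to_subtype
  obtain ⟨lam, hlam, hle⟩ := (Matrix.isSymmetric_toEuclideanLin_iff.mpr
    (isHermitian_normLapMatrix (Ω := Ω) hsymm)).exists_hasEigenvalue_forall_re_inner_le
  obtain ⟨v, hv⟩ := hlam.exists_hasEigenvector
  obtain ⟨g, hg_out, rfl⟩ := exists_sqrtDegEmbed_eq hdeg v
  refine ⟨lam, ⟨g, ?_, hg_out, fun x hx => ?_⟩, fun h => ?_⟩
  · by_contra! hg
    exact hv.2 (sqrtDegEmbed_eq_zero g hg)
  · have hx' := congr($(hv.apply_eq_smul) ⟨x, hx⟩)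
    rw [normLapMatrix_sqrtDegEmbed hdeg] at hx'
    simp only [sqrtDegEmbed, PiLp.toLp_apply, PiLp.smul_apply, smul_eq_mul,
      RCLike.ofReal_real_eq_id, id] at hx'
    have hsx : √(deg μ x) ≠ 0 := (Real.sqrt_pos.2 (hdeg x)).ne'
    exact mul_left_cancel₀ hsx (by rw [hx']; ring)
  · have hh := hle (sqrtDegEmbed μ Ω h)
    rwa [normLapMatrix_sqrtDegEmbed hdeg, RCLike.re_to_real, ← real_inner_self_eq_norm_sq,
      inner_sqrtDegEmbed (fun x => (hdeg x).le), inner_sqrtDegEmbed (fun x => (hdeg x).le)] at hh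

theorem le_of_mul_self_le_dLap_mul (hdeg : ∀ x, 0 < deg μ x) {lam c : ℝ} {g : V → ℝ}
    (hlam : muInner μ Ω (dLap μ Ω g) g ≤ lam * muInner μ Ω g g) (hg : ∃ x ∈ Ω, g x ≠ 0)
    (hc : ∀ x ∈ Ω, c * (g x * g x) ≤ dLap μ Ω g x * g x) : c ≤ lam := by
  obtain ⟨x₀, hx₀, hgx₀⟩ := hg
  have hpos : 0 < muInner μ Ω g g :=
    Finset.sum_pos' (fun x _ => mul_nonneg (hdeg x).le (mul_self_nonneg _))
      ⟨x₀, hx₀, mul_pos (hdeg x₀) (mul_self_pos.mpr hgx₀)⟩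
  refine le_of_mul_le_mul_right ?_ hpos
  calc c * muInner μ Ω g g ≤ muInner μ Ω (dLap μ Ω g) g := by
        rw [muInner, Finset.mul_sum]
        refine Finset.sum_le_sum fun x hx => ?_
        rw [mul_left_comm]
        exact mul_le_mul_of_nonneg_left (hc x hx) (hdeg x).le
    _ ≤ lam * muInner μ Ω g g := hlam

end Dirichlet

theorem stmt12_general {V : Type*} (μ : V → V → ℝ) (hsymm : ∀ x y, μ x y = μ y x)
    (hdeg : ∀ x : V, 0 < deg μ x)
    (Ω : Finset V) (hne : Ω.Nonempty)
    (f : V → ℝ) (hf : ∀ x ∈ Ω, f x ≠ 0) :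
    Ω.inf' hne (fun x => dLap μ Ω f x / f x) ≤ lamMax μ Ω := by
  obtain ⟨lam, hlam_eig, hlam⟩ := exists_isDirEig_forall_muInner_dLap_le hsymm hdeg hne
  have hbdd : BddAbove {l | IsDirEig μ Ω l} := ⟨lam, fun l ⟨g, hg, _, heq⟩ =>
    le_of_mul_self_le_dLap_mul hdeg (hlam g) hg fun x hx => by rw [heq x hx, mul_assoc]⟩
  refine le_trans ?_ (le_csSup hbdd hlam_eig)
  obtain ⟨x₀, hx₀⟩ := id hne
  refine le_of_mul_self_le_dLap_mul hdeg (hlam f) ⟨x₀, hx₀, hf x₀ hx₀⟩ fun x hx => ?_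
  calc _ ≤ dLap μ Ω f x / f x * (f x * f x) :=
        mul_le_mul_of_nonneg_right (Finset.inf'_le _ hx) (mul_self_nonneg _)
    _ = dLap μ Ω f x * f x := by field_simp [hf x hx]

theorem stmt12 {V : Type*} [Infinite V] (μ : V → V → ℝ) (hsymm : ∀ x y, μ x y = μ y x) (hnn : ∀ x y, 0 ≤ μ x y)
    (hfin : ∀ x : V, (Function.support (μ x)).Finite) (hdeg : ∀ x : V, 0 < deg μ x)
    (hconnG : ∀ x y : V, Relation.ReflTransGen (fun a b => μ a b ≠ 0) x y)
    (Ω : Finset V) (hconn : ConnectedOn μ Ω) (hcard : 2 ≤ Ω.card) (hne : Ω.Nonempty)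
    (f : V → ℝ) (hf : ∀ x ∈ Ω, f x ≠ 0) :
    Ω.inf' hne (fun x => dLap μ Ω f x / f x) ≤ lamMax μ Ω :=
  stmt12_general μ hsymm hdeg Ω hne f hf
end

section
/- If two vertices x and z at equal distance N ≤ r from x₀ are adjacent (z ∈ V₀(x)), then x and z lie on a common circuit (cycle with no repeated vertices) of odd length at most 2r+1. Consequently κ(x₀,r) ≤ C(x₀,r). -/
def OddCircuitThrough {V : Type*} (G : SimpleGraph V) (r : ℕ) (x y : V) : Prop :=
  ∃ w : G.Walk x x, w.IsCycle ∧ Odd w.length ∧ w.length ≤ 2 * r + 1 ∧ y ∈ w.support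

/-- κ(x₀,r) : supremum over x in the ball of μ₀(x)/μ(x). -/
noncomputable def kappaConst {V : Type*} (G : SimpleGraph V) (μ : V → V → ℝ)
    (x₀ : V) (r : ℕ) : ℝ :=
  sSup {t : ℝ | ∃ x : V, G.dist x₀ x ≤ r ∧
    t = (∑ᶠ y ∈ {y : V | G.Adj x y ∧ G.dist x₀ y = G.dist x₀ x}, μ x y) / (∑ᶠ y, μ x y)}

/-- C(x₀,r) : supremum over x in the ball of the weighted fraction of neighbours lying with
x on a common odd circuit of length ≤ 2r+1. -/
noncomputable def clusterConst {V : Type*} (G : SimpleGraph V) (μ : V → V → ℝ)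
    (x₀ : V) (r : ℕ) : ℝ :=
  sSup {t : ℝ | ∃ x : V, G.dist x₀ x ≤ r ∧
    t = (∑ᶠ y ∈ {y : V | G.Adj x y ∧ OddCircuitThrough G r x y}, μ x y) / (∑ᶠ y, μ x y)}

/-- Split a walk at the first vertex lying in a set `S` (the endpoint is assumed in `S`). -/
lemma walk_split_first {V : Type*} {G : SimpleGraph V} (S : Set V) :
    ∀ {a b : V} (p : G.Walk a b), b ∈ S →
    ∃ (y : V) (p₁ : G.Walk a y) (p₂ : G.Walk y b), p = p₁.append p₂ ∧ y ∈ S ∧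
      ∀ v ∈ p₁.support, v ∈ S → v = y := by
  intro a b p
  induction p with
  | nil => exact fun hb => ⟨_, SimpleGraph.Walk.nil, SimpleGraph.Walk.nil, rfl, hb,
      by intro v hv _
         rw [SimpleGraph.Walk.support_nil, List.mem_singleton] at hv
         exact hv⟩
  | @cons u v w h q ih =>
    intro hb
    by_cases hu : u ∈ S
    · exact ⟨u, SimpleGraph.Walk.nil, SimpleGraph.Walk.cons h q, rfl, hu, by simp⟩
    · obtain ⟨y, q₁, q₂, hq, hy, hmin⟩ := ih hb
      refine ⟨y, SimpleGraph.Walk.cons h q₁, q₂, by rw [SimpleGraph.Walk.cons_append, ← hq],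
        hy, ?_⟩
      intro v hv hvS
      rw [SimpleGraph.Walk.support_cons, List.mem_cons] at hv
      rcases hv with rfl | hv
      · exact absurd hvS hu
      · exact hmin v hv hvS

/-- On a geodesic, every support vertex splits the distance additively. -/
lemma dist_add_dist_of_mem_support {V : Type*} {G : SimpleGraph V} (hconn : G.Connected)
    {a b v : V} (p : G.Walk a b) (hp : p.length = G.dist a b) (hv : v ∈ p.support) :
    G.dist a v + G.dist v b = G.dist a b := by
  classical
  have h1 := SimpleGraph.dist_le (p.takeUntil v hv)
  have h2 := SimpleGraph.dist_le (p.dropUntil v hv)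
  have h3 : (p.takeUntil v hv).length + (p.dropUntil v hv).length = p.length := by
    rw [← SimpleGraph.Walk.length_append, SimpleGraph.Walk.take_spec]
  have h4 := hconn.dist_triangle (u := a) (v := v) (w := b)
  omega

lemma oddCircuit_main {V : Type*} {G : SimpleGraph V} (hconn : G.Connected)
    {x₀ : V} {r N : ℕ} {x z : V} (hadj : G.Adj x z)
    (hdx : G.dist x₀ x = N) (hdz : G.dist x₀ z = N) (hN : N ≤ r) :
    OddCircuitThrough G r x z := by
  classical
  obtain ⟨P, hP⟩ := hconn.exists_walk_length_eq_dist x₀ x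
  obtain ⟨Q, hQ⟩ := hconn.exists_walk_length_eq_dist x₀ z
  set p := P.bypass with hpdef
  set q := Q.bypass with hqdef
  have hppath : p.IsPath := P.bypass_isPath
  have hqpath : q.IsPath := Q.bypass_isPath
  have hplen : p.length = G.dist x₀ x :=
    le_antisymm (hP ▸ P.length_bypass_le) (SimpleGraph.dist_le _)
  have hqlen : q.length = G.dist x₀ z :=
    le_antisymm (hQ ▸ Q.length_bypass_le) (SimpleGraph.dist_le _)
  -- z is not on p, x is not on q
  have hznp : z ∉ p.support := by
    intro hzp
    have := dist_add_dist_of_mem_support hconn p hplen hzp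
    rw [hdx, hdz] at this
    have hz0 : G.dist z x = 0 := by omega
    exact hadj.ne' (hconn.dist_eq_zero_iff.mp hz0)
  have hxnq : x ∉ q.support := by
    intro hxq
    have := dist_add_dist_of_mem_support hconn q hqlen hxq
    rw [hdx, hdz] at this
    have hx0 : G.dist x z = 0 := by omega
    exact hadj.ne (hconn.dist_eq_zero_iff.mp hx0)
  -- split p.reverse at the first vertex in q.support
  obtain ⟨y, p₁, p₂, hsplit, hyq, hmin⟩ :=
    walk_split_first {v : V | v ∈ q.support} p.reverse (q.start_mem_support)
  set D := q.dropUntil y hyq with hDdef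
  set T := q.takeUntil y hyq with hTdef
  have hp₁path : p₁.IsPath := by
    have : (p₁.append p₂).IsPath := hsplit ▸ hppath.reverse
    exact this.of_append_left
  have hDpath : D.IsPath := hqpath.dropUntil hyq
  have hp₁sub : p₁.support ⊆ p.support := by
    intro v hv
    have : v ∈ p.reverse.support := hsplit ▸ SimpleGraph.Walk.subset_support_append_left _ _ hv
    rwa [SimpleGraph.Walk.support_reverse, List.mem_reverse] at this
  have hznp₁ : z ∉ p₁.support := fun hz => hznp (hp₁sub hz)
  have hxnD : x ∉ D.support := fun hx => hxnq (q.support_dropUntil_subset hyq hx)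
  -- the path part of the cycle
  have hApath : (D.reverse.append p₁.reverse).IsPath := by
    apply SimpleGraph.Walk.IsPath.mk'
    rw [SimpleGraph.Walk.support_append]
    apply List.Nodup.append
    · exact hDpath.reverse.support_nodup
    · exact hp₁path.reverse.support_nodup.tail
    · intro v hvD hvp
      have hvq : v ∈ q.support := by
        rw [SimpleGraph.Walk.support_reverse, List.mem_reverse] at hvD
        exact q.support_dropUntil_subset hyq hvD
      have hvp₁ : v ∈ p₁.support := by
        have : v ∈ p₁.reverse.support := List.mem_of_mem_tail hvp
        rwa [SimpleGraph.Walk.support_reverse, List.mem_reverse] at this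
      have hvy : v = y := hmin v hvp₁ hvq
      subst hvy
      have hnd : p₁.reverse.support.Nodup := hp₁path.reverse.support_nodup
      rw [p₁.reverse.support_eq_cons] at hnd
      exact (List.nodup_cons.mp hnd).1 hvp
  have hedge : s(x, z) ∉ (D.reverse.append p₁.reverse).edges := by
    rw [SimpleGraph.Walk.edges_append, List.mem_append]
    rintro (he | he)
    · rw [SimpleGraph.Walk.edges_reverse, List.mem_reverse] at he
      exact hxnD (SimpleGraph.Walk.fst_mem_support_of_mem_edges _ he)
    · rw [SimpleGraph.Walk.edges_reverse, List.mem_reverse] at he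
      exact hznp₁ (SimpleGraph.Walk.snd_mem_support_of_mem_edges _ he)
  refine ⟨SimpleGraph.Walk.cons hadj (D.reverse.append p₁.reverse),
    (SimpleGraph.Walk.cons_isCycle_iff _ hadj).mpr ⟨hApath, hedge⟩, ?_, ?_, ?_⟩
  -- length facts
  all_goals {
    have h1 : G.dist x₀ y ≤ T.length := SimpleGraph.dist_le T
    have h2 : G.dist y z ≤ D.length := SimpleGraph.dist_le D
    have h3 : T.length + D.length = N := by
      rw [← SimpleGraph.Walk.length_append, SimpleGraph.Walk.take_spec, hqlen, hdz]
    have h4 : G.dist x y ≤ p₁.length := by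
      have := SimpleGraph.dist_le p₁; omega
    have h5 : G.dist x₀ y ≤ p₂.length := by
      have := SimpleGraph.dist_le p₂; rwa [SimpleGraph.dist_comm] at this
    have h6 : p₁.length + p₂.length = N := by
      rw [← SimpleGraph.Walk.length_append, ← hsplit, SimpleGraph.Walk.length_reverse,
        hplen, hdx]
    have h7 : N ≤ G.dist x₀ y + G.dist y z := by
      rw [← hdz]; exact hconn.dist_triangle
    have h8 : N ≤ G.dist x₀ y + G.dist x y := by
      rw [← hdx, SimpleGraph.dist_comm (u := x)]
      exact hconn.dist_triangle
    have hlen : (SimpleGraph.Walk.cons hadj (D.reverse.append p₁.reverse)).length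
        = D.length + p₁.length + 1 := by
      rw [SimpleGraph.Walk.length_cons, SimpleGraph.Walk.length_append,
        SimpleGraph.Walk.length_reverse, SimpleGraph.Walk.length_reverse]
    first
    | (exact ⟨N - G.dist x₀ y, by omega⟩)
    | (omega)
    | (simp [SimpleGraph.Walk.support_append]) }

theorem stmt13 {V : Type*} (G : SimpleGraph V) (hconn : G.Connected)
    (μ : V → V → ℝ) (hsymm : ∀ x y, μ x y = μ y x) (hnn : ∀ x y, 0 ≤ μ x y)
    (hfin : ∀ x : V, (Function.support (μ x)).Finite)
    (hsupp : ∀ x y : V, ¬ G.Adj x y → μ x y = 0)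
    (hpos : ∀ x y : V, G.Adj x y → 0 < μ x y)
    (x₀ : V) (r N : ℕ) (x z : V) (hadj : G.Adj x z)
    (hdx : G.dist x₀ x = N) (hdz : G.dist x₀ z = N) (hN : N ≤ r) :
    OddCircuitThrough G r x z ∧ kappaConst G μ x₀ r ≤ clusterConst G μ x₀ r := by
  classical
  refine ⟨oddCircuit_main hconn hadj hdx hdz hN, ?_⟩
  -- sum monotonicity helpers
  have hmono : ∀ (x' : V) (A B : Set V), A ⊆ B →
      (∑ᶠ y ∈ A, μ x' y) ≤ ∑ᶠ y ∈ B, μ x' y := by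
    intro x' A B hAB
    have hA : (A ∩ Function.support (μ x')).Finite :=
      (hfin x').subset Set.inter_subset_right
    have hB : (B ∩ Function.support (μ x')).Finite :=
      (hfin x').subset Set.inter_subset_right
    rw [finsum_mem_eq_sum _ hA, finsum_mem_eq_sum _ hB]
    apply Finset.sum_le_sum_of_subset_of_nonneg
    · intro y hy
      rw [Set.Finite.mem_toFinset] at *
      exact ⟨hAB hy.1, hy.2⟩
    · exact fun y _ _ => hnn x' y
  have hle_total : ∀ (x' : V) (B : Set V), (∑ᶠ y ∈ B, μ x' y) ≤ ∑ᶠ y, μ x' y := by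
    intro x' B
    have hB : (B ∩ Function.support (μ x')).Finite :=
      (hfin x').subset Set.inter_subset_right
    rw [finsum_mem_eq_sum _ hB, finsum_eq_sum _ (hfin x')]
    apply Finset.sum_le_sum_of_subset_of_nonneg
    · intro y hy
      rw [Set.Finite.mem_toFinset] at *
      exact hy.2
    · exact fun y _ _ => hnn x' y
  have hnum_nonneg : ∀ (x' : V) (B : Set V), (0:ℝ) ≤ ∑ᶠ y ∈ B, μ x' y := by
    intro x' B
    have hB : (B ∩ Function.support (μ x')).Finite :=
      (hfin x').subset Set.inter_subset_right
    rw [finsum_mem_eq_sum _ hB]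
    exact Finset.sum_nonneg fun y _ => hnn x' y
  have hden_nonneg : ∀ x' : V, (0:ℝ) ≤ ∑ᶠ y, μ x' y := fun x' => finsum_nonneg (hnn x')
  -- the target set is nonempty and bounded above
  set T : Set ℝ := {t : ℝ | ∃ x' : V, G.dist x₀ x' ≤ r ∧
    t = (∑ᶠ y ∈ {y : V | G.Adj x' y ∧ OddCircuitThrough G r x' y}, μ x' y) / (∑ᶠ y, μ x' y)}
    with hTdef
  have hTmem : ∀ t ∈ T, t ≤ 1 := by
    rintro t ⟨x', _, rfl⟩
    rcases eq_or_lt_of_le (hden_nonneg x') with hd0 | hdpos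
    · have h0 : (∑ᶠ y ∈ {y : V | G.Adj x' y ∧ OddCircuitThrough G r x' y}, μ x' y) = 0 :=
        le_antisymm (by rw [hd0]; exact hle_total x' _) (hnum_nonneg x' _)
      rw [h0]; simp
    · exact div_le_one_of_le₀ (hle_total x' _) (le_of_lt hdpos)
  have hTbdd : BddAbove T := ⟨1, fun t ht => hTmem t ht⟩
  apply csSup_le
  · exact ⟨_, x₀, by simp [SimpleGraph.dist_self], rfl⟩
  · rintro t ⟨x', hx', rfl⟩
    have hsubset : {y : V | G.Adj x' y ∧ G.dist x₀ y = G.dist x₀ x'} ⊆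
        {y : V | G.Adj x' y ∧ OddCircuitThrough G r x' y} := by
      rintro y ⟨hadj', hdisty⟩
      exact ⟨hadj', oddCircuit_main hconn hadj' rfl hdisty hx'⟩
    have hnumle := hmono x' _ _ hsubset
    have hdivle := div_le_div_of_nonneg_right hnumle (hden_nonneg x')
    exact le_trans hdivle (le_csSup hTbdd ⟨x', hx', rfl⟩)
end
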